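/- Let u solve ∂_t u = iΔu on R^d (formally) and set v = e^{|x|^2/2} u. Then v satisfies ∂_t v = (S + A)v with S v = −i(2x·∇ + 1)v and A v = i(Δ + |x|^2)v, the commutator satisfies SA − AS = −4Δ + 4|x|^2 as an operator identity on smooth functions, and ⟨(SA − AS)w, w⟩ = 4(‖∇w‖_{L^2}^2 + ‖xw‖_{L^2}^2) ≥ 4‖w‖_{L^2}^2 for all Schwartz w. -/

import Mathlib

open MeasureTheory

/-- The symmetric part `S w = −i(2x·∂ + 1)w` of the conjugated Schrödinger operator. -/
noncomputable def Sop (w : ℝ → ℂ) (x : ℝ) : ℂ :=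
  -Complex.I * (2 * (x : ℂ) * deriv w x + w x)

/-- The skew-symmetric part `A w = i(∂² + x²)w` of the conjugated Schrödinger operator. -/
noncomputable def Aop (w : ℝ → ℂ) (x : ℝ) : ℂ :=
  Complex.I * (deriv (deriv w) x + (x : ℂ) ^ 2 * w x)


lemma smooth_deriv {w : ℝ → ℂ} (hw : ContDiff ℝ ((⊤:ℕ∞):WithTop ℕ∞) w) :
    ContDiff ℝ ((⊤:ℕ∞):WithTop ℕ∞) (deriv w) :=
  (contDiff_infty_iff_deriv.mp hw).2

lemma sdiff {w : ℝ → ℂ} (hw : ContDiff ℝ ((⊤:ℕ∞):WithTop ℕ∞) w) : Differentiable ℝ w :=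
  hw.differentiable (by simp)

lemma hxC (x : ℝ) : HasDerivAt (fun y : ℝ => ((y:ℂ))) (1:ℂ) x :=
  (hasDerivAt_id x).ofReal_comp

lemma hx2 (x : ℝ) : HasDerivAt (fun y : ℝ => ((y:ℂ))^2) (2*(x:ℂ)) x := by
  have : HasDerivAt (fun y : ℝ => (y:ℂ) * (y:ℂ)) _ x := (hxC x).mul (hxC x)
  simpa [sq, two_mul] using this

lemma hasDerivAt_Aop {w : ℝ → ℂ} (hw : ContDiff ℝ ((⊤:ℕ∞):WithTop ℕ∞) w) (x : ℝ) :
    HasDerivAt (Aop w) (Complex.I * (deriv (deriv (deriv w)) x +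
      (2*(x:ℂ) * w x + (x:ℂ)^2 * deriv w x))) x := by
  have h1 : HasDerivAt (deriv (deriv w)) (deriv (deriv (deriv w)) x) x :=
    (sdiff (smooth_deriv (smooth_deriv hw)) x).hasDerivAt
  have h2 : HasDerivAt (fun y : ℝ => ((y:ℂ))^2 * w y)
      (2*(x:ℂ) * w x + (x:ℂ)^2 * deriv w x) x :=
    (hx2 x).mul (sdiff hw x).hasDerivAt
  exact ((h1.add h2).const_mul Complex.I)

lemma hasDerivAt_Sop {w : ℝ → ℂ} (hw : ContDiff ℝ ((⊤:ℕ∞):WithTop ℕ∞) w) (x : ℝ) :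
    HasDerivAt (Sop w) (-Complex.I * ((2 * deriv w x + 2*(x:ℂ) * deriv (deriv w) x) +
      deriv w x)) x := by
  have h1 : HasDerivAt (fun y : ℝ => 2 * (y:ℂ) * deriv w y)
      (2 * deriv w x + 2*(x:ℂ) * deriv (deriv w) x) x := by
    have : HasDerivAt (fun y : ℝ => 2 * (y:ℂ) * deriv w y) _ x := (((hxC x).const_mul (2:ℂ)).mul (sdiff (smooth_deriv hw) x).hasDerivAt)
    simpa [mul_comm, mul_assoc] using this
  exact ((h1.add (sdiff hw x).hasDerivAt).const_mul (-Complex.I))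

theorem part2 (w : ℝ → ℂ) (hw : ContDiff ℝ ((⊤:ℕ∞):WithTop ℕ∞) w) (x : ℝ) :
    Sop (Aop w) x - Aop (Sop w) x = -4 * deriv (deriv w) x + 4 * (x : ℂ) ^ 2 * w x := by
  have hSder : ∀ y, deriv (Sop w) y = -Complex.I * (3 * deriv w y + 2*(y:ℂ) * deriv (deriv w) y) := by
    intro y
    rw [(hasDerivAt_Sop hw y).deriv]; ring
  have hAder : deriv (Aop w) x = Complex.I * (deriv (deriv (deriv w)) x +
      (2*(x:ℂ) * w x + (x:ℂ)^2 * deriv w x)) := (hasDerivAt_Aop hw x).deriv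
  have hSder2 : deriv (deriv (Sop w)) x
      = -Complex.I * (5 * deriv (deriv w) x + 2*(x:ℂ) * deriv (deriv (deriv w)) x) := by
    have hcongr : deriv (Sop w) = fun y => -Complex.I * (3 * deriv w y + 2*(y:ℂ) * deriv (deriv w) y) :=
      funext hSder
    rw [hcongr]
    have h1 : HasDerivAt (fun y : ℝ => 3 * deriv w y + 2*(y:ℂ) * deriv (deriv w) y)
        (3 * deriv (deriv w) x + (2 * deriv (deriv w) x + 2*(x:ℂ) * deriv (deriv (deriv w)) x)) x := by
      refine HasDerivAt.add ((sdiff (smooth_deriv hw) x).hasDerivAt.const_mul 3) ?_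
      have : HasDerivAt (fun y : ℝ => 2 * (y:ℂ) * deriv (deriv w) y) _ x := (((hxC x).const_mul (2:ℂ)).mul (sdiff (smooth_deriv (smooth_deriv hw)) x).hasDerivAt)
      simpa [mul_comm, mul_assoc] using this
    rw [(h1.const_mul (-Complex.I)).deriv]; ring
  simp only [Sop, Aop, hAder, hSder2, hSder]
  linear_combination (4*deriv (deriv w) x - 4*(x:ℂ)^2*w x) * Complex.I_sq

-- Gaussian weight derivative
lemma hE (x : ℝ) : HasDerivAt (fun y : ℝ => (Real.exp (y ^ 2 / 2) : ℂ))
    ((x:ℂ) * Real.exp (x ^ 2 / 2)) x := by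
  have h0 : HasDerivAt (fun y : ℝ => y ^ 2 / 2) x x := by
    simpa using (hasDerivAt_pow 2 x).div_const 2
  have := h0.exp.ofReal_comp
  convert this using 1
  push_cast; ring

lemma conj_identity (u : ℝ → ℂ) (hu : ContDiff ℝ ((⊤:ℕ∞):WithTop ℕ∞) u) (x : ℝ) :
    Sop (fun y => (Real.exp (y ^ 2 / 2) : ℂ) * u y) x +
      Aop (fun y => (Real.exp (y ^ 2 / 2) : ℂ) * u y) x
    = (Real.exp (x ^ 2 / 2) : ℂ) * (Complex.I * deriv (deriv u) x) := by
  have hv1 : ∀ y : ℝ, HasDerivAt (fun y => (Real.exp (y ^ 2 / 2) : ℂ) * u y)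
      ((y:ℂ) * Real.exp (y ^ 2 / 2) * u y + (Real.exp (y ^ 2 / 2) : ℂ) * deriv u y) y :=
    fun y => (hE y).mul (sdiff hu y).hasDerivAt
  have hv1' : deriv (fun y => (Real.exp (y ^ 2 / 2) : ℂ) * u y)
      = fun y : ℝ => (y:ℂ) * Real.exp (y ^ 2 / 2) * u y + (Real.exp (y ^ 2 / 2) : ℂ) * deriv u y :=
    funext fun y => (hv1 y).deriv
  have hv2 : deriv (deriv (fun y => (Real.exp (y ^ 2 / 2) : ℂ) * u y)) x
      = (Real.exp (x ^ 2 / 2) : ℂ) * (deriv (deriv u) x + 2*(x:ℂ) * deriv u x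
          + (1 + (x:ℂ)^2) * u x) := by
    rw [hv1']
    have h1 : HasDerivAt (fun y : ℝ => (y:ℂ) * Real.exp (y ^ 2 / 2) * u y)
        ((1 * (Real.exp (x ^ 2 / 2) : ℂ) + (x:ℂ) * ((x:ℂ) * Real.exp (x ^ 2 / 2))) * u x
          + (x:ℂ) * Real.exp (x ^ 2 / 2) * deriv u x) x :=
      (((hxC x).mul (hE x)).mul (sdiff hu x).hasDerivAt)
    have h2 : HasDerivAt (fun y : ℝ => (Real.exp (y ^ 2 / 2) : ℂ) * deriv u y)
        ((x:ℂ) * Real.exp (x ^ 2 / 2) * deriv u x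
          + (Real.exp (x ^ 2 / 2) : ℂ) * deriv (deriv u) x) x :=
      (hE x).mul (sdiff (smooth_deriv hu) x).hasDerivAt
    rw [(show HasDerivAt (fun y : ℝ => (y:ℂ) * Real.exp (y ^ 2 / 2) * u y + (Real.exp (y ^ 2 / 2) : ℂ) * deriv u y) _ x from h1.add h2).deriv]; ring
  simp only [Sop, Aop]
  rw [hv2, hv1']
  simp only []
  ring


lemma norm_sq_re_im (z : ℂ) : ‖z‖^2 = z.re^2 + z.im^2 := by
  rw [Complex.sq_norm, Complex.normSq_apply]; ring

lemma conj_mul' (z : ℂ) : (starRingEnd ℂ) z * z = ((‖z‖^2 : ℝ) : ℂ) := by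
  rw [RCLike.conj_mul z]; norm_cast

lemma schwartz_bound (f : SchwartzMap ℝ ℂ) : ∃ C, (0:ℝ) ≤ C ∧ ∀ x, ‖f x‖ ≤ C := by
  obtain ⟨C, hC⟩ := f.decay 0 0
  exact ⟨C, le_of_lt hC.1, fun x => by simpa using hC.2 x⟩

lemma integrable_aux (g : SchwartzMap ℝ ℂ) {φ : ℝ → ℂ} (hφ : Continuous φ) (C : ℝ)
    (h : ∀ x, ‖φ x‖ ≤ C * ‖g x‖) : Integrable φ volume :=
  ((g.integrable (μ := volume)).norm.const_mul C).mono' hφ.aestronglyMeasurable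
    (Filter.Eventually.of_forall h)

lemma integrable_auxR (g : SchwartzMap ℝ ℂ) {φ : ℝ → ℝ} (hφ : Continuous φ) (C : ℝ)
    (h : ∀ x, ‖φ x‖ ≤ C * ‖g x‖) : Integrable φ volume :=
  ((g.integrable (μ := volume)).norm.const_mul C).mono' hφ.aestronglyMeasurable
    (Filter.Eventually.of_forall h)

lemma integrable_auxP (g : SchwartzMap ℝ ℂ) (k : ℕ) {φ : ℝ → ℝ} (hφ : Continuous φ) (C : ℝ)
    (h : ∀ x, ‖φ x‖ ≤ C * (‖x‖ ^ k * ‖g x‖)) : Integrable φ volume :=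
  ((g.integrable_pow_mul volume k).const_mul C).mono' hφ.aestronglyMeasurable
    (Filter.Eventually.of_forall h)

lemma integrable_auxPC (g : SchwartzMap ℝ ℂ) (k : ℕ) {φ : ℝ → ℂ} (hφ : Continuous φ) (C : ℝ)
    (h : ∀ x, ‖φ x‖ ≤ C * (‖x‖ ^ k * ‖g x‖)) : Integrable φ volume :=
  ((g.integrable_pow_mul volume k).const_mul C).mono' hφ.aestronglyMeasurable
    (Filter.Eventually.of_forall h)

set_option maxHeartbeats 1000000 in
theorem part3 (w : SchwartzMap ℝ ℂ) :
    (∫ x : ℝ, (starRingEnd ℂ) (w x) *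
        (Sop (Aop (fun y => w y)) x - Aop (Sop (fun y => w y)) x)) =
      ((4 * ((∫ x : ℝ, ‖deriv (fun y => w y) x‖ ^ 2) +
          ∫ x : ℝ, x ^ 2 * ‖w x‖ ^ 2) : ℝ) : ℂ) ∧
    4 * (∫ x : ℝ, ‖w x‖ ^ 2) ≤
      4 * ((∫ x : ℝ, ‖deriv (fun y => w y) x‖ ^ 2) + ∫ x : ℝ, x ^ 2 * ‖w x‖ ^ 2) := by
  obtain ⟨C0, hC0n, hC0⟩ := schwartz_bound w
  set w1 : SchwartzMap ℝ ℂ := SchwartzMap.derivCLM ℝ ℂ w with hw1def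
  set w2 : SchwartzMap ℝ ℂ := SchwartzMap.derivCLM ℝ ℂ w1 with hw2def
  obtain ⟨C1, hC1n, hC1⟩ := schwartz_bound w1
  have hd1 : deriv (fun y => w y) = fun x => w1 x :=
    funext fun x => (SchwartzMap.derivCLM_apply (𝕜 := ℝ) w x).symm
  have hd2 : deriv (fun y => w1 y) = fun x => w2 x :=
    funext fun x => (SchwartzMap.derivCLM_apply (𝕜 := ℝ) w1 x).symm
  have hW : ∀ x, HasDerivAt (fun y => w y) (w1 x) x := fun x => by
    have h := (w.differentiableAt (x := x)).hasDerivAt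
    rwa [show deriv (fun y => w y) x = w1 x from congrFun hd1 x] at h
  have hW1 : ∀ x, HasDerivAt (fun y => w1 y) (w2 x) x := fun x => by
    have h := (w1.differentiableAt (x := x)).hasDerivAt
    rwa [show deriv (fun y => w1 y) x = w2 x from congrFun hd2 x] at h
  have hdd : deriv (deriv (fun y => w y)) = fun x => w2 x := by rw [hd1]; exact hd2
  -- pointwise commutator
  have hpt : ∀ x : ℝ, (starRingEnd ℂ) (w x) *
      (Sop (Aop (fun y => w y)) x - Aop (Sop (fun y => w y)) x)
      = -4 * ((starRingEnd ℂ) (w x) * w2 x)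
        + 4 * ((x:ℂ)^2 * ((‖w x‖^2 : ℝ) : ℂ)) := by
    intro x
    rw [part2 (fun y => w y) (w.smooth ⊤) x, congrFun hdd x]
    linear_combination (4*(x:ℂ)^2) * conj_mul' (w x)
  -- integrability
  have ccw : Continuous (fun x : ℝ => (starRingEnd ℂ) (w x)) :=
    continuous_star.comp w.continuous
  have ccw1 : Continuous (fun x : ℝ => (starRingEnd ℂ) (w1 x)) :=
    continuous_star.comp w1.continuous
  have I1 : Integrable (fun x => (starRingEnd ℂ) (w x) * w2 x) volume := by
    refine integrable_aux w2 (ccw.mul w2.continuous) C0 (fun x => ?_)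
    rw [norm_mul, RCLike.norm_conj]
    exact mul_le_mul_of_nonneg_right (hC0 x) (norm_nonneg _)
  have I2 : Integrable (fun x => (starRingEnd ℂ) (w1 x) * w1 x) volume := by
    refine integrable_aux w1 (ccw1.mul w1.continuous) C1 (fun x => ?_)
    rw [norm_mul, RCLike.norm_conj]
    exact mul_le_mul_of_nonneg_right (hC1 x) (norm_nonneg _)
  have I3 : Integrable (fun x => (starRingEnd ℂ) (w x) * w1 x) volume := by
    refine integrable_aux w1 (ccw.mul w1.continuous) C0 (fun x => ?_)
    rw [norm_mul, RCLike.norm_conj]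
    exact mul_le_mul_of_nonneg_right (hC0 x) (norm_nonneg _)
  have I4 : Integrable (fun x : ℝ => (x:ℂ)^2 * ((‖w x‖^2 : ℝ) : ℂ)) volume := by
    refine integrable_auxPC w 2 ((Complex.continuous_ofReal.pow 2).mul
      (Complex.continuous_ofReal.comp ((w.continuous.norm.pow 2)))) C0 (fun x => ?_)
    have h1 : ‖(x:ℂ)^2 * ((‖w x‖^2 : ℝ) : ℂ)‖ = |x|^2 * ‖w x‖^2 := by
      rw [norm_mul, norm_pow, Complex.norm_real, Complex.norm_real]
      simp [Real.norm_eq_abs, abs_of_nonneg (sq_nonneg (‖w x‖)), sq_abs]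
    rw [h1, Real.norm_eq_abs]
    have := hC0 x
    have hn := norm_nonneg (w x)
    have h3 : (0:ℝ) ≤ |x|^2 * ‖w x‖ := by positivity
    nlinarith [mul_le_mul_of_nonneg_left (hC0 x) h3, sq_abs x]
  -- complex integration by parts
  have hibp : (∫ x, (starRingEnd ℂ) (w x) * w2 x)
      = - ∫ x, (starRingEnd ℂ) (w1 x) * w1 x := by
    have hu : ∀ x : ℝ, HasDerivAt (fun y => (starRingEnd ℂ) (w y)) ((starRingEnd ℂ) (w1 x)) x :=
      fun x => by simpa using (hW x).star
    exact integral_mul_deriv_eq_deriv_mul_of_integrable (fun x _ => hu x) (fun x _ => hW1 x) I1 I2 I3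
  have e2 : (∫ x, (starRingEnd ℂ) (w1 x) * w1 x) = ((∫ x, ‖w1 x‖^2 : ℝ) : ℂ) := by
    simp_rw [conj_mul']
    exact integral_ofReal
  have e4 : (∫ x : ℝ, (x:ℂ)^2 * ((‖w x‖^2 : ℝ) : ℂ)) = ((∫ x, x^2 * ‖w x‖^2 : ℝ) : ℂ) := by
    have hfn : (fun x : ℝ => (x:ℂ)^2 * ((‖w x‖^2 : ℝ) : ℂ))
        = fun x : ℝ => (((x^2 * ‖w x‖^2 : ℝ)) : ℂ) := funext fun x => by push_cast; ring
    rw [hfn]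
    exact integral_ofReal
  constructor
  · simp only [hd1]
    calc (∫ x : ℝ, (starRingEnd ℂ) (w x) *
        (Sop (Aop (fun y => w y)) x - Aop (Sop (fun y => w y)) x))
        = ∫ x : ℝ, (-4 * ((starRingEnd ℂ) (w x) * w2 x)
            + 4 * ((x:ℂ)^2 * ((‖w x‖^2 : ℝ) : ℂ))) := by
          exact integral_congr_ae (Filter.Eventually.of_forall hpt)
      _ = (-4) * (∫ x, (starRingEnd ℂ) (w x) * w2 x)
            + 4 * ∫ x : ℝ, (x:ℂ)^2 * ((‖w x‖^2 : ℝ) : ℂ) := by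
          rw [integral_add (I1.const_mul (-4)) (I4.const_mul 4),
            integral_const_mul, integral_const_mul]
      _ = ((4 * ((∫ x : ℝ, ‖w1 x‖ ^ 2) + ∫ x : ℝ, x ^ 2 * ‖w x‖ ^ 2) : ℝ) : ℂ) := by
          rw [hibp, e2, e4]; push_cast; ring
  · -- Heisenberg-type inequality
    simp only [hd1]
    set D : ℝ → ℝ := fun x => 2*((w x).re*(w1 x).re + (w x).im*(w1 x).im) with hD
    have hN : ∀ x, HasDerivAt (fun y => ‖w y‖^2) (D x) x := by
      intro x
      have hNfun : (fun y : ℝ => ‖w y‖^2) = fun y => (w y).re^2 + (w y).im^2 :=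
        funext fun y => norm_sq_re_im (w y)
      rw [hNfun]
      have hre : HasDerivAt (fun y => (w y).re) ((w1 x).re) x :=
        Complex.reCLM.hasFDerivAt.comp_hasDerivAt x (hW x)
      have him : HasDerivAt (fun y => (w y).im) ((w1 x).im) x :=
        Complex.imCLM.hasFDerivAt.comp_hasDerivAt x (hW x)
      have h := ((hre.mul hre).add (him.mul him))
      have hfn : (fun y : ℝ => (w y).re^2 + (w y).im^2)
          = fun y => (w y).re*(w y).re + (w y).im*(w y).im := funext fun y => by ring
      rw [hfn]
      refine h.congr_deriv ?_
      simp only [hD]; ring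
    have hDle : ∀ x, |D x| ≤ 2 * (‖w x‖ * ‖w1 x‖) := by
      intro x
      have h1 : D x = 2 * ((starRingEnd ℂ) (w x) * w1 x).re := by
        simp only [hD, Complex.mul_re, Complex.conj_re, Complex.conj_im]; ring
      rw [h1, abs_mul]
      have h2 : |((starRingEnd ℂ) (w x) * w1 x).re| ≤ ‖(starRingEnd ℂ) (w x) * w1 x‖ :=
        Complex.abs_re_le_norm _
      rw [norm_mul, RCLike.norm_conj] at h2
      rw [abs_two]
      linarith
    have RN : Integrable (fun x => ‖w x‖^2) volume := by
      refine integrable_auxR w (w.continuous.norm.pow 2) C0 (fun x => ?_)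
      rw [Real.norm_of_nonneg (sq_nonneg _)]
      have := hC0 x; have hn := norm_nonneg (w x)
      nlinarith [mul_le_mul_of_nonneg_left (hC0 x) hn]
    have RN1 : Integrable (fun x => ‖w1 x‖^2) volume := by
      refine integrable_auxR w1 (w1.continuous.norm.pow 2) C1 (fun x => ?_)
      rw [Real.norm_of_nonneg (sq_nonneg _)]
      have := hC1 x; have hn := norm_nonneg (w1 x)
      nlinarith [mul_le_mul_of_nonneg_left (hC1 x) hn]
    have RxN : Integrable (fun x => x * ‖w x‖^2) volume := by
      refine integrable_auxP w 1 (continuous_id.mul (w.continuous.norm.pow 2)) C0 (fun x => ?_)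
      rw [Real.norm_eq_abs, abs_mul, abs_of_nonneg (sq_nonneg (‖w x‖)), Real.norm_eq_abs, pow_one]
      have := hC0 x; have hn := norm_nonneg (w x); have ha := abs_nonneg x
      nlinarith [mul_le_mul_of_nonneg_left (hC0 x) (mul_nonneg ha hn)]
    have RxD : Integrable (fun x => x * D x) volume := by
      have cD : Continuous D := by
        rw [hD]
        exact continuous_const.mul (((Complex.continuous_re.comp w.continuous).mul
          (Complex.continuous_re.comp w1.continuous)).add
          ((Complex.continuous_im.comp w.continuous).mul
          (Complex.continuous_im.comp w1.continuous)))
      refine integrable_auxP w 1 (continuous_id.mul cD) (2*C1) (fun x => ?_)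
      rw [Real.norm_eq_abs, abs_mul, Real.norm_eq_abs, pow_one]
      have h2 := hDle x
      have := hC1 x; have hn := norm_nonneg (w x); have ha := abs_nonneg x
      have hn1 := norm_nonneg (w1 x)
      nlinarith [mul_le_mul_of_nonneg_left h2 ha,
        mul_le_mul_of_nonneg_left (hC1 x) (mul_nonneg ha hn)]
    have Rx2N : Integrable (fun x => x^2 * ‖w x‖^2) volume := by
      refine integrable_auxP w 2 ((continuous_pow 2).mul (w.continuous.norm.pow 2)) C0 (fun x => ?_)
      rw [Real.norm_eq_abs, abs_mul, abs_of_nonneg (sq_nonneg (‖w x‖)), Real.norm_eq_abs, abs_of_nonneg (sq_nonneg x), ← sq_abs x]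
      have := hC0 x; have hn := norm_nonneg (w x); have ha := abs_nonneg x
      nlinarith [mul_le_mul_of_nonneg_left (hC0 x) (mul_nonneg (mul_nonneg ha ha) hn)]
    have hibpR : (∫ x : ℝ, x * D x) = - ∫ x : ℝ, (1:ℝ) * ‖w x‖^2 := by
      refine integral_mul_deriv_eq_deriv_mul_of_integrable
        (fun x _ => hasDerivAt_id x) (fun x _ => hN x) RxD ?_ RxN
      exact RN.congr (Filter.Eventually.of_forall fun x => (one_mul _).symm)
    have h1N : (∫ x : ℝ, (1:ℝ) * ‖w x‖^2) = ∫ x : ℝ, ‖w x‖^2 := by simp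
    have key : (∫ x : ℝ, ‖w x‖^2) ≤ (∫ x : ℝ, ‖w1 x‖^2) + ∫ x : ℝ, x^2*‖w x‖^2 := by
      have hmono : (∫ x : ℝ, -(x * D x)) ≤ ∫ x : ℝ, (x^2*‖w x‖^2 + ‖w1 x‖^2) := by
        refine integral_mono RxD.neg (Rx2N.add RN1) (fun x => ?_)
        have hw2 := norm_sq_re_im (w x)
        have hw12 := norm_sq_re_im (w1 x)
        simp only [hD]
        nlinarith [sq_nonneg (x*(w x).re + (w1 x).re), sq_nonneg (x*(w x).im + (w1 x).im)]
      rw [integral_neg, hibpR, h1N, neg_neg] at hmono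
      rw [integral_add Rx2N RN1] at hmono
      linarith
    linarith

/-- Conjugating the free Schrödinger equation `∂_t u = iΔu` by the Gaussian weight
`e^{x²/2}` yields `∂_t v = (S + A)v` with `S v = −i(2x·∂ + 1)v`, `A v = i(∂² + x²)v`;
the commutator satisfies `SA − AS = −4Δ + 4x²` on smooth functions, and its quadratic
form satisfies `⟨(SA − AS)w, w⟩ = 4(‖∂w‖² + ‖xw‖²) ≥ 4‖w‖²` for Schwartz `w`. -/
theorem conjugated_schrodinger_commutator :
    (∀ u : ℝ → ℝ → ℂ, (∀ t : ℝ, ContDiff ℝ (⊤ : ℕ∞) (u t)) →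
      (∀ t x : ℝ, HasDerivAt (fun τ => u τ x) (Complex.I * deriv (deriv (u t)) x) t) →
      ∀ t x : ℝ, HasDerivAt (fun τ => (Real.exp (x ^ 2 / 2) : ℂ) * u τ x)
        (Sop (fun y => (Real.exp (y ^ 2 / 2) : ℂ) * u t y) x +
          Aop (fun y => (Real.exp (y ^ 2 / 2) : ℂ) * u t y) x) t) ∧
    (∀ w : ℝ → ℂ, ContDiff ℝ (⊤ : ℕ∞) w → ∀ x : ℝ,
      Sop (Aop w) x - Aop (Sop w) x = -4 * deriv (deriv w) x + 4 * (x : ℂ) ^ 2 * w x) ∧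
    (∀ w : SchwartzMap ℝ ℂ,
      (∫ x : ℝ, (starRingEnd ℂ) (w x) *
          (Sop (Aop (fun y => w y)) x - Aop (Sop (fun y => w y)) x)) =
        ((4 * ((∫ x : ℝ, ‖deriv (fun y => w y) x‖ ^ 2) +
            ∫ x : ℝ, x ^ 2 * ‖w x‖ ^ 2) : ℝ) : ℂ) ∧
      4 * (∫ x : ℝ, ‖w x‖ ^ 2) ≤
        4 * ((∫ x : ℝ, ‖deriv (fun y => w y) x‖ ^ 2) + ∫ x : ℝ, x ^ 2 * ‖w x‖ ^ 2)) := by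
  refine ⟨?_, fun w hw x => part2 w (hw.of_le (by simp)) x, fun w => part3 w⟩
  intro u hsm hu t x
  have h := (hu t x).const_mul ((Real.exp (x ^ 2 / 2) : ℂ))
  have hid := conj_identity (u t) ((hsm t).of_le (by simp)) x
  rw [← hid] at h
  exact h
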